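/- (Approximate performance difference for policy-dependent reward) Let π_b be a behavior policy of the fixed finite discounted MDP with π_b(s,a) > 0 for all (s,a). For any two policies π and π̃ with π(s,a) > 0 and π̃(s,a) > 0 for all (s,a), J_{C_π}(π) − J_{C_{π̃}}(π̃) ≤ (1−γ)^{-1} ∑_s d^{π̃}(s) ∑_a π(s,a) A^{π̃}_{C_{π̃}}(s,a) + (√2 γ ε_{π̃}/(1−γ)²) √(D^{π̃}_KL(π, π̃)) + (1−γ)^{-1} D^max_KL(π, π̃), where ε_{π̃} = max_{s,a} |A^{π̃}_{C_{π̃}}(s,a)|. -/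

import Mathlib

open Finset

/-- Time-`t` state distribution of policy `π` in the MDP with transitions `P`
and initial distribution `μ`. -/
noncomputable def pDist {S A : Type*} [Fintype S] [Fintype A]
    (P : S → A → S → ℝ) (μ : S → ℝ) (π : S → A → ℝ) : ℕ → S → ℝ
  | 0 => μ
  | t + 1 => fun s' => ∑ s, ∑ a, pDist P μ π t s * π s a * P s a s'

/-- Discounted state visitation distribution `d^π`. -/
noncomputable def dvisit {S A : Type*} [Fintype S] [Fintype A]
    (P : S → A → S → ℝ) (μ : S → ℝ) (γ : ℝ) (π : S → A → ℝ) (s : S) : ℝ :=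
  (1 - γ) * ∑' t : ℕ, γ ^ t * pDist P μ π t s

/-- Discounted return `J_R(π)`. -/
noncomputable def Jret {S A : Type*} [Fintype S] [Fintype A]
    (P : S → A → S → ℝ) (μ : S → ℝ) (γ : ℝ) (R : S → A → ℝ) (π : S → A → ℝ) : ℝ :=
  ∑' t : ℕ, γ ^ t * ∑ s, ∑ a, pDist P μ π t s * π s a * R s a

/-- Advantage function `A_R^π(s,a) = Q_R^π(s,a) - V_R^π(s)`, expressed in terms of
the value function `V` of the policy. -/
noncomputable def Adv {S A : Type*} [Fintype S]
    (P : S → A → S → ℝ) (γ : ℝ) (R : S → A → ℝ) (V : S → ℝ) (s : S) (a : A) : ℝ :=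
  (R s a + γ * ∑ s', P s a s' * V s') - V s

/-- KL divergence between two distributions on a finite type. -/
noncomputable def KL {X : Type*} [Fintype X] (p q : X → ℝ) : ℝ :=
  ∑ x, p x * Real.log (p x / q x)

/-- Total variation distance between two distributions on a finite type. -/
noncomputable def TV {X : Type*} [Fintype X] (p q : X → ℝ) : ℝ :=
  (1 / 2) * ∑ x, |p x - q x|

/-! Since `C_π = C_π̃ + log (π / π̃)`, the return `J_{C_π}(π)` is the return of `π` under the
fixed reward `C_π̃` plus `(1-γ)⁻¹ 𝔼_{d^π} KL(π, π̃) ≤ (1-γ)⁻¹ D^max_KL(π, π̃)`. Both the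
performance difference identity and the estimate
`(1-γ) ‖d^π - d^π̃‖₁ ≤ γ 𝔼_{d^π̃} ‖π - π̃‖₁` come from the flow equation
`d^ρ = (1-γ) μ + γ d^ρ P_ρ`. Replacing `d^π` by `d^π̃` in the advantage term therefore costs at most
`ε ‖d^π - d^π̃‖₁`, and Pinsker's inequality together with Cauchy–Schwarz bounds
`𝔼_{d^π̃} ‖π - π̃‖₁` by `√(2 D^π̃_KL(π, π̃))`. -/

section WeightedAverage

variable {X : Type*} [Fintype X] {w f : X → ℝ} {M : ℝ}

theorem sum_mul_le_of_le (hw0 : ∀ x, 0 ≤ w x) (hw1 : ∑ x, w x = 1) (hf : ∀ x, f x ≤ M) :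
    ∑ x, w x * f x ≤ M :=
  calc ∑ x, w x * f x ≤ ∑ x, w x * M :=
        sum_le_sum fun x _ => mul_le_mul_of_nonneg_left (hf x) (hw0 x)
    _ = M := by rw [← sum_mul, hw1, one_mul]

theorem abs_sum_mul_le_of_abs_le (hw0 : ∀ x, 0 ≤ w x) (hw1 : ∑ x, w x = 1)
    (hf : ∀ x, |f x| ≤ M) : |∑ x, w x * f x| ≤ M := by
  refine abs_le.2 ⟨?_, sum_mul_le_of_le hw0 hw1 fun x => le_of_abs_le (hf x)⟩
  have := sum_mul_le_of_le hw0 hw1 (f := fun x => -f x) fun x => neg_le.1 (abs_le.1 (hf x)).1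
  simp only [mul_neg, sum_neg_distrib] at this
  linarith

theorem sum_mul_le_sqrt_sum_mul_sq (hw0 : ∀ x, 0 ≤ w x) (hw1 : ∑ x, w x = 1) :
    ∑ x, w x * f x ≤ Real.sqrt (∑ x, w x * f x ^ 2) := by
  refine (le_abs_self _).trans (Real.abs_le_sqrt ?_)
  have := sum_sq_le_sum_mul_sum_of_sq_le_mul univ (r := fun x => w x * f x)
    (fun x _ => hw0 x) (fun x _ => mul_nonneg (hw0 x) (sq_nonneg (f x)))
    (fun x _ => le_of_eq (by ring))
  rwa [hw1, one_mul] at this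

end WeightedAverage

/- The difference of the two sides is convex on `(0, ∞)`, with second derivative
`4 (log y + y⁻¹ - 1) ≥ 0`, and has a critical point at `1`. -/
theorem three_mul_sq_sub_one_le {x : ℝ} (hx : 0 < x) :
    3 * (x - 1) ^ 2 ≤ 2 * (x + 2) * (x * Real.log x - x + 1) := by
  set f : ℝ → ℝ := fun x => 2 * (x + 2) * (x * Real.log x - x + 1) - 3 * (x - 1) ^ 2
  set f' : ℝ → ℝ := fun x => 4 * ((x + 1) * Real.log x - 2 * x + 2)
  have hf : ∀ y > 0, HasDerivAt f (f' y) y := fun y hy => by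
    have := ((((hasDerivAt_id' y).add_const 2).const_mul 2).fun_mul
      (((Real.hasDerivAt_mul_log hy.ne').fun_sub (hasDerivAt_id' y)).add_const 1)).fun_sub
      ((((hasDerivAt_id' y).sub_const 1).fun_pow 2).const_mul 3)
    refine this.congr_deriv ?_
    simp only [f']
    ring
  have hf' : ∀ y > 0, HasDerivAt f' (4 * (Real.log y + y⁻¹ - 1)) y := fun y hy => by
    have := (((((hasDerivAt_id' y).add_const 1).fun_mul (Real.hasDerivAt_log hy.ne')).fun_sub
      ((hasDerivAt_id' y).const_mul 2)).add_const 2).const_mul 4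
    refine this.congr_deriv ?_
    field_simp
    ring
  have hconv : ConvexOn ℝ (Set.Ioi 0) f := by
    refine convexOn_of_hasDerivWithinAt2_nonneg (f' := f')
      (f'' := fun y => 4 * (Real.log y + y⁻¹ - 1)) (convex_Ioi 0)
      (fun y hy => (hf y hy).continuousAt.continuousWithinAt) ?_ ?_ ?_ <;>
      rw [interior_Ioi]
    · exact fun y hy => (hf y hy).hasDerivWithinAt
    · exact fun y hy => (hf' y hy).hasDerivWithinAt
    · intro y hy
      have := Real.one_sub_inv_le_log_of_pos hy
      linarith
  have hmin : IsMinOn f (Set.Ioi 0) 1 := by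
    refine hconv.isMinOn_of_rightDeriv_eq_zero (by simp) ?_
    rw [((hf 1 one_pos).hasDerivWithinAt).derivWithin (uniqueDiffWithinAt_Ioi 1)]
    simp [f']
  have := hmin hx
  simp [f] at this
  linarith

theorem sq_sub_div_add_two_mul_le {p q : ℝ} (hp : 0 < p) (hq : 0 < q) :
    (p - q) ^ 2 / (p + 2 * q) ≤ 2 / 3 * (p * Real.log (p / q) - p + q) := by
  have h := three_mul_sq_sub_one_le (div_pos hp hq)
  rw [div_le_iff₀ (by positivity)]
  field_simp at h
  nlinarith [h]

/- Sedrakyan's lemma with the weights `p + 2 q`, of total mass `3`, reduces Pinsker's inequality to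
the pointwise bound `sq_sub_div_add_two_mul_le`. -/
theorem sq_sum_abs_sub_le_two_mul_KL {X : Type*} [Fintype X] {p q : X → ℝ}
    (hp : ∀ x, 0 < p x) (hq : ∀ x, 0 < q x) (hp1 : ∑ x, p x = 1) (hq1 : ∑ x, q x = 1) :
    (∑ x, |p x - q x|) ^ 2 ≤ 2 * KL p q := by
  have hpos : ∀ x ∈ univ, 0 < p x + 2 * q x := fun x _ => by linarith [hp x, hq x]
  have hmass : ∑ x, (p x + 2 * q x) = 3 := by
    rw [sum_add_distrib, ← mul_sum, hp1, hq1]; norm_num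
  have hsedrakyan := sq_sum_div_le_sum_sq_div univ (fun x => |p x - q x|) hpos
  rw [hmass] at hsedrakyan
  have hterm : ∑ x, |p x - q x| ^ 2 / (p x + 2 * q x)
      ≤ ∑ x, 2 / 3 * (p x * Real.log (p x / q x) - p x + q x) :=
    sum_le_sum fun x _ => by rw [sq_abs]; exact sq_sub_div_add_two_mul_le (hp x) (hq x)
  rw [← mul_sum, sum_add_distrib, sum_sub_distrib, hp1, hq1, ← KL] at hterm
  linarith

theorem sum_mul_sum_abs_sub_le_sqrt_two_mul_sqrt {S A : Type*} [Fintype S] [Fintype A]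
    {w : S → ℝ} {π πt : S → A → ℝ} (hw0 : ∀ s, 0 ≤ w s) (hw1 : ∑ s, w s = 1)
    (hπ0 : ∀ s a, 0 < π s a) (hπ1 : ∀ s, ∑ a, π s a = 1)
    (hπt0 : ∀ s a, 0 < πt s a) (hπt1 : ∀ s, ∑ a, πt s a = 1) :
    ∑ s, w s * ∑ a, |π s a - πt s a| ≤
      Real.sqrt 2 * Real.sqrt (∑ s, w s * KL (π s) (πt s)) :=
  calc ∑ s, w s * ∑ a, |π s a - πt s a|
      ≤ Real.sqrt (∑ s, w s * (∑ a, |π s a - πt s a|) ^ 2) :=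
        sum_mul_le_sqrt_sum_mul_sq hw0 hw1
    _ ≤ Real.sqrt (2 * ∑ s, w s * KL (π s) (πt s)) := by
        refine Real.sqrt_le_sqrt ?_
        rw [mul_sum]
        refine sum_le_sum fun s _ => ?_
        rw [mul_left_comm]
        exact mul_le_mul_of_nonneg_left
          (sq_sum_abs_sub_le_two_mul_KL (hπ0 s) (hπt0 s) (hπ1 s) (hπt1 s)) (hw0 s)
    _ = Real.sqrt 2 * Real.sqrt (∑ s, w s * KL (π s) (πt s)) := Real.sqrt_mul zero_le_two _

section StateDistribution

variable {S A : Type*} [Fintype S] [Fintype A] {P : S → A → S → ℝ} {μ : S → ℝ}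
  {ρ : S → A → ℝ} {γ : ℝ}

theorem pDist_nonneg (hP0 : ∀ s a s', 0 ≤ P s a s') (hμ0 : ∀ s, 0 ≤ μ s)
    (hρ0 : ∀ s a, 0 ≤ ρ s a) (t : ℕ) (s : S) : 0 ≤ pDist P μ ρ t s := by
  induction t generalizing s with
  | zero => exact hμ0 s
  | succ t ih =>
    exact sum_nonneg fun s _ => sum_nonneg fun a _ =>
      mul_nonneg (mul_nonneg (ih s) (hρ0 s a)) (hP0 s a _)

theorem sum_pDist (hP1 : ∀ s a, ∑ s', P s a s' = 1) (hμ1 : ∑ s, μ s = 1)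
    (hρ1 : ∀ s, ∑ a, ρ s a = 1) (t : ℕ) : ∑ s, pDist P μ ρ t s = 1 := by
  induction t with
  | zero => exact hμ1
  | succ t ih =>
    calc ∑ s', pDist P μ ρ (t + 1) s'
        = ∑ s, ∑ a, pDist P μ ρ t s * ρ s a * ∑ s', P s a s' := by
          simp only [pDist, mul_sum]
          rw [sum_comm]
          exact sum_congr rfl fun s _ => sum_comm
      _ = 1 := by simp only [hP1, mul_one, ← mul_sum, hρ1, ih]

theorem summable_geometric_mul_pDist (hP0 : ∀ s a s', 0 ≤ P s a s')
    (hP1 : ∀ s a, ∑ s', P s a s' = 1) (hμ0 : ∀ s, 0 ≤ μ s) (hμ1 : ∑ s, μ s = 1)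
    (hρ0 : ∀ s a, 0 ≤ ρ s a) (hρ1 : ∀ s, ∑ a, ρ s a = 1) (hγ0 : 0 ≤ γ) (hγ1 : γ < 1)
    (s : S) : Summable fun t => γ ^ t * pDist P μ ρ t s := by
  refine (summable_geometric_of_lt_one hγ0 hγ1).of_nonneg_of_le
    (fun t => mul_nonneg (pow_nonneg hγ0 t) (pDist_nonneg hP0 hμ0 hρ0 t s)) fun t => ?_
  refine mul_le_of_le_one_right (pow_nonneg hγ0 t) ?_
  exact (single_le_sum (fun s _ => pDist_nonneg hP0 hμ0 hρ0 t s) (mem_univ s)).trans_eq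
    (sum_pDist hP1 hμ1 hρ1 t)

theorem tsum_geometric_mul_sum_pDist (hP0 : ∀ s a s', 0 ≤ P s a s')
    (hP1 : ∀ s a, ∑ s', P s a s' = 1) (hμ0 : ∀ s, 0 ≤ μ s) (hμ1 : ∑ s, μ s = 1)
    (hρ0 : ∀ s a, 0 ≤ ρ s a) (hρ1 : ∀ s, ∑ a, ρ s a = 1) (hγ0 : 0 ≤ γ) (hγ1 : γ < 1)
    (f : S → ℝ) :
    ∑' t, γ ^ t * ∑ s, pDist P μ ρ t s * f s =
      (1 - γ)⁻¹ * ∑ s, dvisit P μ γ ρ s * f s := by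
  have hγ : 1 - γ ≠ 0 := sub_ne_zero.2 hγ1.ne'
  simp_rw [mul_sum, ← mul_assoc]
  rw [Summable.tsum_finsetSum fun s _ =>
    (summable_geometric_mul_pDist hP0 hP1 hμ0 hμ1 hρ0 hρ1 hγ0 hγ1 s).mul_right (f s)]
  simp_rw [tsum_mul_right, dvisit, ← mul_assoc, inv_mul_cancel₀ hγ, one_mul]

theorem dvisit_nonneg (hP0 : ∀ s a s', 0 ≤ P s a s') (hμ0 : ∀ s, 0 ≤ μ s)
    (hρ0 : ∀ s a, 0 ≤ ρ s a) (hγ0 : 0 ≤ γ) (hγ1 : γ < 1) (s : S) :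
    0 ≤ dvisit P μ γ ρ s :=
  mul_nonneg (sub_nonneg.2 hγ1.le) <| tsum_nonneg fun t =>
    mul_nonneg (pow_nonneg hγ0 t) (pDist_nonneg hP0 hμ0 hρ0 t s)

theorem sum_dvisit (hP0 : ∀ s a s', 0 ≤ P s a s')
    (hP1 : ∀ s a, ∑ s', P s a s' = 1) (hμ0 : ∀ s, 0 ≤ μ s) (hμ1 : ∑ s, μ s = 1)
    (hρ0 : ∀ s a, 0 ≤ ρ s a) (hρ1 : ∀ s, ∑ a, ρ s a = 1) (hγ0 : 0 ≤ γ) (hγ1 : γ < 1) :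
    ∑ s, dvisit P μ γ ρ s = 1 := by
  have h := tsum_geometric_mul_sum_pDist hP0 hP1 hμ0 hμ1 hρ0 hρ1 hγ0 hγ1 fun _ => 1
  simp only [mul_one, sum_pDist hP1 hμ1 hρ1, tsum_geometric_of_lt_one hγ0 hγ1] at h
  have hγ : 1 - γ ≠ 0 := sub_ne_zero.2 hγ1.ne'
  field_simp at h
  exact h.symm

theorem dvisit_eq (hP0 : ∀ s a s', 0 ≤ P s a s')
    (hP1 : ∀ s a, ∑ s', P s a s' = 1) (hμ0 : ∀ s, 0 ≤ μ s) (hμ1 : ∑ s, μ s = 1)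
    (hρ0 : ∀ s a, 0 ≤ ρ s a) (hρ1 : ∀ s, ∑ a, ρ s a = 1) (hγ0 : 0 ≤ γ) (hγ1 : γ < 1)
    (s' : S) :
    dvisit P μ γ ρ s' =
      (1 - γ) * μ s' + γ * ∑ s, ∑ a, dvisit P μ γ ρ s * ρ s a * P s a s' := by
  have hstep : ∀ t, γ ^ (t + 1) * pDist P μ ρ (t + 1) s' =
      γ * (γ ^ t * ∑ s, pDist P μ ρ t s * ∑ a, ρ s a * P s a s') := fun t => by
    simp only [pDist, mul_sum]
    exact sum_congr rfl fun s _ => sum_congr rfl fun a _ => by ring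
  have hγ : 1 - γ ≠ 0 := sub_ne_zero.2 hγ1.ne'
  rw [dvisit, (summable_geometric_mul_pDist hP0 hP1 hμ0 hμ1 hρ0 hρ1 hγ0 hγ1 s').tsum_eq_zero_add,
    tsum_congr hstep, tsum_mul_left, tsum_geometric_mul_sum_pDist hP0 hP1 hμ0 hμ1 hρ0 hρ1 hγ0 hγ1]
  have hflow : ∑ s, dvisit P μ γ ρ s * ∑ a, ρ s a * P s a s' =
      ∑ s, ∑ a, dvisit P μ γ ρ s * ρ s a * P s a s' := by
    simp only [mul_sum, mul_assoc]
  rw [hflow, pow_zero, one_mul, pDist]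
  field_simp

end StateDistribution

section Return

variable {S A : Type*} [Fintype S] [Fintype A] {P : S → A → S → ℝ} {μ : S → ℝ}
  {ρ : S → A → ℝ} {γ : ℝ}

theorem Jret_eq_sum_dvisit (hP0 : ∀ s a s', 0 ≤ P s a s')
    (hP1 : ∀ s a, ∑ s', P s a s' = 1) (hμ0 : ∀ s, 0 ≤ μ s) (hμ1 : ∑ s, μ s = 1)
    (hρ0 : ∀ s a, 0 ≤ ρ s a) (hρ1 : ∀ s, ∑ a, ρ s a = 1) (hγ0 : 0 ≤ γ) (hγ1 : γ < 1)
    (R : S → A → ℝ) :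
    Jret P μ γ R ρ = (1 - γ)⁻¹ * ∑ s, dvisit P μ γ ρ s * ∑ a, ρ s a * R s a := by
  rw [Jret, ← tsum_geometric_mul_sum_pDist hP0 hP1 hμ0 hμ1 hρ0 hρ1 hγ0 hγ1]
  simp only [mul_sum, mul_assoc]

theorem sum_dvisit_mul_sum_transition (hP0 : ∀ s a s', 0 ≤ P s a s')
    (hP1 : ∀ s a, ∑ s', P s a s' = 1) (hμ0 : ∀ s, 0 ≤ μ s) (hμ1 : ∑ s, μ s = 1)
    (hρ0 : ∀ s a, 0 ≤ ρ s a) (hρ1 : ∀ s, ∑ a, ρ s a = 1) (hγ0 : 0 ≤ γ) (hγ1 : γ < 1)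
    (V : S → ℝ) :
    γ * ∑ s, dvisit P μ γ ρ s * ∑ a, ρ s a * ∑ s', P s a s' * V s' =
      ∑ s', (dvisit P μ γ ρ s' - (1 - γ) * μ s') * V s' := by
  have hflow : ∀ s', dvisit P μ γ ρ s' - (1 - γ) * μ s' =
      γ * ∑ s, ∑ a, dvisit P μ γ ρ s * ρ s a * P s a s' := fun s' => by
    rw [sub_eq_iff_eq_add', dvisit_eq hP0 hP1 hμ0 hμ1 hρ0 hρ1 hγ0 hγ1 s']
  simp_rw [hflow, mul_sum, sum_mul]
  conv_rhs => rw [sum_comm]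
  refine sum_congr rfl fun s _ => ?_
  rw [sum_comm]
  exact sum_congr rfl fun s' _ => sum_congr rfl fun a _ => by ring

theorem sum_dvisit_mul_sum_mul_Adv (hP0 : ∀ s a s', 0 ≤ P s a s')
    (hP1 : ∀ s a, ∑ s', P s a s' = 1) (hμ0 : ∀ s, 0 ≤ μ s) (hμ1 : ∑ s, μ s = 1)
    (hρ0 : ∀ s a, 0 ≤ ρ s a) (hρ1 : ∀ s, ∑ a, ρ s a = 1) (hγ0 : 0 ≤ γ) (hγ1 : γ < 1)
    (R : S → A → ℝ) (V : S → ℝ) :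
    ∑ s, dvisit P μ γ ρ s * ∑ a, ρ s a * Adv P γ R V s a =
      ∑ s, dvisit P μ γ ρ s * ∑ a, ρ s a * R s a - (1 - γ) * ∑ s, μ s * V s := by
  have hAdv : ∀ s, ∑ a, ρ s a * Adv P γ R V s a =
      ∑ a, ρ s a * R s a + γ * ∑ a, ρ s a * ∑ s', P s a s' * V s' - V s := fun s => by
    simp only [Adv, mul_sub, mul_add, sum_sub_distrib, sum_add_distrib, ← sum_mul, hρ1 s,
      one_mul, mul_left_comm _ γ, ← mul_sum]
  have htrans := sum_dvisit_mul_sum_transition hP0 hP1 hμ0 hμ1 hρ0 hρ1 hγ0 hγ1 V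
  simp only [hAdv, mul_sub, mul_add, sum_sub_distrib, sum_add_distrib, mul_left_comm _ γ,
    ← mul_sum]
  rw [htrans]
  simp only [sub_mul, sum_sub_distrib, mul_assoc, ← mul_sum]
  ring

theorem Jret_eq_of_bellman (hP0 : ∀ s a s', 0 ≤ P s a s')
    (hP1 : ∀ s a, ∑ s', P s a s' = 1) (hμ0 : ∀ s, 0 ≤ μ s) (hμ1 : ∑ s, μ s = 1)
    (hρ0 : ∀ s a, 0 ≤ ρ s a) (hρ1 : ∀ s, ∑ a, ρ s a = 1) (hγ0 : 0 ≤ γ) (hγ1 : γ < 1)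
    (R : S → A → ℝ) (V : S → ℝ)
    (hV : ∀ s, V s = ∑ a, ρ s a * (R s a + γ * ∑ s', P s a s' * V s')) :
    Jret P μ γ R ρ = ∑ s, μ s * V s := by
  have hAdv : ∀ s, ∑ a, ρ s a * Adv P γ R V s a = 0 := fun s => by
    simp only [Adv, mul_sub, sum_sub_distrib, ← sum_mul, hρ1 s, one_mul, ← hV s, sub_self]
  have h := sum_dvisit_mul_sum_mul_Adv hP0 hP1 hμ0 hμ1 hρ0 hρ1 hγ0 hγ1 R V
  simp only [hAdv, mul_zero, sum_const_zero] at h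
  have hγ : 1 - γ ≠ 0 := sub_ne_zero.2 hγ1.ne'
  rw [Jret_eq_sum_dvisit hP0 hP1 hμ0 hμ1 hρ0 hρ1 hγ0 hγ1, inv_mul_eq_iff_eq_mul₀ hγ]
  linarith

end Return

theorem sum_mul_log_div_eq_add_KL {X : Type*} [Fintype X] {p q r : X → ℝ}
    (hp : ∀ x, p x ≠ 0) (hq : ∀ x, q x ≠ 0) (hr : ∀ x, r x ≠ 0) :
    ∑ x, p x * Real.log (p x / r x) = ∑ x, p x * Real.log (q x / r x) + KL p q := by
  rw [KL, ← sum_add_distrib]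
  refine sum_congr rfl fun x _ => ?_
  rw [Real.log_div (hp x) (hr x), Real.log_div (hq x) (hr x), Real.log_div (hp x) (hq x)]
  ring

theorem sum_abs_sum_sum_mul_le {S A : Type*} [Fintype S] [Fintype A] {P : S → A → S → ℝ}
    (hP0 : ∀ s a s', 0 ≤ P s a s') (hP1 : ∀ s a, ∑ s', P s a s' = 1) (x : S → A → ℝ) :
    ∑ s', |∑ s, ∑ a, x s a * P s a s'| ≤ ∑ s, ∑ a, |x s a| :=
  calc ∑ s', |∑ s, ∑ a, x s a * P s a s'|
      ≤ ∑ s', ∑ s, ∑ a, |x s a| * P s a s' := by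
        gcongr with s'
        refine (abs_sum_le_sum_abs _ _).trans (sum_le_sum fun s _ => ?_)
        refine (abs_sum_le_sum_abs _ _).trans_eq (sum_congr rfl fun a _ => ?_)
        rw [abs_mul, abs_of_nonneg (hP0 s a s')]
    _ = ∑ s, ∑ a, |x s a| := by
        rw [sum_comm]
        refine sum_congr rfl fun s _ => ?_
        rw [sum_comm]
        simp only [← mul_sum, hP1, mul_one]

section PolicyComparison

variable {S A : Type*} [Fintype S] [Fintype A] {P : S → A → S → ℝ} {μ : S → ℝ}
  {π πt : S → A → ℝ} {γ : ℝ}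

theorem Jret_sub_Jret_eq (hP0 : ∀ s a s', 0 ≤ P s a s')
    (hP1 : ∀ s a, ∑ s', P s a s' = 1) (hμ0 : ∀ s, 0 ≤ μ s) (hμ1 : ∑ s, μ s = 1)
    (hπ0 : ∀ s a, 0 ≤ π s a) (hπ1 : ∀ s, ∑ a, π s a = 1)
    (hπt0 : ∀ s a, 0 ≤ πt s a) (hπt1 : ∀ s, ∑ a, πt s a = 1) (hγ0 : 0 ≤ γ) (hγ1 : γ < 1)
    (R : S → A → ℝ) (V : S → ℝ)
    (hV : ∀ s, V s = ∑ a, πt s a * (R s a + γ * ∑ s', P s a s' * V s')) :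
    Jret P μ γ R π - Jret P μ γ R πt =
      (1 - γ)⁻¹ * ∑ s, dvisit P μ γ π s * ∑ a, π s a * Adv P γ R V s a := by
  have hγ : 1 - γ ≠ 0 := sub_ne_zero.2 hγ1.ne'
  rw [Jret_eq_of_bellman hP0 hP1 hμ0 hμ1 hπt0 hπt1 hγ0 hγ1 R V hV,
    sum_dvisit_mul_sum_mul_Adv hP0 hP1 hμ0 hμ1 hπ0 hπ1 hγ0 hγ1,
    Jret_eq_sum_dvisit hP0 hP1 hμ0 hμ1 hπ0 hπ1 hγ0 hγ1]
  field_simp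

theorem Jret_log_div_sub_Jret_log_div_eq (hP0 : ∀ s a s', 0 ≤ P s a s')
    (hP1 : ∀ s a, ∑ s', P s a s' = 1) (hμ0 : ∀ s, 0 ≤ μ s) (hμ1 : ∑ s, μ s = 1)
    (hπ0 : ∀ s a, 0 < π s a) (hπ1 : ∀ s, ∑ a, π s a = 1)
    (hπt0 : ∀ s a, 0 < πt s a) (hπt1 : ∀ s, ∑ a, πt s a = 1) (hγ0 : 0 ≤ γ) (hγ1 : γ < 1)
    {πb : S → A → ℝ} (hπb0 : ∀ s a, 0 < πb s a) (V : S → ℝ)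
    (hV : ∀ s, V s = ∑ a, πt s a *
      (Real.log (πt s a / πb s a) + γ * ∑ s', P s a s' * V s')) :
    Jret P μ γ (fun s a => Real.log (π s a / πb s a)) π -
        Jret P μ γ (fun s a => Real.log (πt s a / πb s a)) πt =
      (1 - γ)⁻¹ * (∑ s, dvisit P μ γ π s *
          ∑ a, π s a * Adv P γ (fun s a => Real.log (πt s a / πb s a)) V s a +
        ∑ s, dvisit P μ γ π s * KL (π s) (πt s)) := by
  have hπ0' : ∀ s a, 0 ≤ π s a := fun s a => (hπ0 s a).le
  have hsplit : Jret P μ γ (fun s a => Real.log (π s a / πb s a)) π =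
      Jret P μ γ (fun s a => Real.log (πt s a / πb s a)) π +
        (1 - γ)⁻¹ * ∑ s, dvisit P μ γ π s * KL (π s) (πt s) := by
    simp only [Jret_eq_sum_dvisit hP0 hP1 hμ0 hμ1 hπ0' hπ1 hγ0 hγ1, ← mul_add, ← sum_add_distrib]
    refine congrArg _ (sum_congr rfl fun s _ => ?_)
    rw [sum_mul_log_div_eq_add_KL (fun a => (hπ0 s a).ne') (fun a => (hπt0 s a).ne')
      (fun a => (hπb0 s a).ne')]
  rw [hsplit, add_sub_right_comm, mul_add, Jret_sub_Jret_eq hP0 hP1 hμ0 hμ1 hπ0' hπ1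
    (fun s a => (hπt0 s a).le) hπt1 hγ0 hγ1 _ V hV]

theorem sum_abs_dvisit_sub_le (hP0 : ∀ s a s', 0 ≤ P s a s')
    (hP1 : ∀ s a, ∑ s', P s a s' = 1) (hμ0 : ∀ s, 0 ≤ μ s) (hμ1 : ∑ s, μ s = 1)
    (hπ0 : ∀ s a, 0 ≤ π s a) (hπ1 : ∀ s, ∑ a, π s a = 1)
    (hπt0 : ∀ s a, 0 ≤ πt s a) (hπt1 : ∀ s, ∑ a, πt s a = 1) (hγ0 : 0 ≤ γ) (hγ1 : γ < 1) :
    (1 - γ) * ∑ s, |dvisit P μ γ π s - dvisit P μ γ πt s| ≤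
      γ * ∑ s, dvisit P μ γ πt s * ∑ a, |π s a - πt s a| := by
  have hflow : ∀ s', dvisit P μ γ π s' - dvisit P μ γ πt s' = γ * ∑ s, ∑ a,
      (dvisit P μ γ π s * π s a - dvisit P μ γ πt s * πt s a) * P s a s' := fun s' => by
    rw [dvisit_eq hP0 hP1 hμ0 hμ1 hπ0 hπ1 hγ0 hγ1 s',
      dvisit_eq hP0 hP1 hμ0 hμ1 hπt0 hπt1 hγ0 hγ1 s']
    simp only [sub_mul, sum_sub_distrib]
    ring
  have hdt := dvisit_nonneg hP0 hμ0 hπt0 hγ0 hγ1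
  set d := dvisit P μ γ π
  set dt := dvisit P μ γ πt
  have hsplit : ∀ s a, |d s * π s a - dt s * πt s a| ≤
      |d s - dt s| * π s a + dt s * |π s a - πt s a| := fun s a => by
    calc |d s * π s a - dt s * πt s a| = |(d s - dt s) * π s a + dt s * (π s a - πt s a)| := by
          ring_nf
      _ ≤ |d s - dt s| * π s a + dt s * |π s a - πt s a| := by
          refine (abs_add_le _ _).trans_eq ?_
          rw [abs_mul, abs_mul, abs_of_nonneg (hπ0 s a), abs_of_nonneg (hdt s)]
  have hcontract : ∑ s, |d s - dt s| ≤
      γ * (∑ s, |d s - dt s| + ∑ s, dt s * ∑ a, |π s a - πt s a|) :=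
    calc ∑ s, |d s - dt s|
        = γ * ∑ s', |∑ s, ∑ a, (d s * π s a - dt s * πt s a) * P s a s'| := by
          rw [mul_sum]
          simp only [hflow, abs_mul, abs_of_nonneg hγ0]
      _ ≤ γ * ∑ s, ∑ a, (|d s - dt s| * π s a + dt s * |π s a - πt s a|) := by
          refine mul_le_mul_of_nonneg_left ((sum_abs_sum_sum_mul_le hP0 hP1 _).trans ?_) hγ0
          exact sum_le_sum fun s _ => sum_le_sum fun a _ => hsplit s a
      _ = γ * (∑ s, |d s - dt s| + ∑ s, dt s * ∑ a, |π s a - πt s a|) := by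
          simp only [sum_add_distrib, ← mul_sum, hπ1, mul_one]
  linarith

theorem sum_dvisit_mul_le_add (hP0 : ∀ s a s', 0 ≤ P s a s')
    (hP1 : ∀ s a, ∑ s', P s a s' = 1) (hμ0 : ∀ s, 0 ≤ μ s) (hμ1 : ∑ s, μ s = 1)
    (hπ0 : ∀ s a, 0 ≤ π s a) (hπ1 : ∀ s, ∑ a, π s a = 1)
    (hπt0 : ∀ s a, 0 ≤ πt s a) (hπt1 : ∀ s, ∑ a, πt s a = 1) (hγ0 : 0 ≤ γ) (hγ1 : γ < 1)
    {f : S → ℝ} {ε : ℝ} (hε : 0 ≤ ε) (hf : ∀ s, |f s| ≤ ε) :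
    ∑ s, dvisit P μ γ π s * f s ≤ ∑ s, dvisit P μ γ πt s * f s +
      γ / (1 - γ) * ε * ∑ s, dvisit P μ γ πt s * ∑ a, |π s a - πt s a| := by
  set d := dvisit P μ γ π
  set dt := dvisit P μ γ πt
  have hγ : 0 < 1 - γ := sub_pos.2 hγ1
  have hTV : ∑ s, |d s - dt s| ≤ γ / (1 - γ) * ∑ s, dt s * ∑ a, |π s a - πt s a| := by
    rw [div_mul_eq_mul_div, le_div_iff₀ hγ, mul_comm]
    exact sum_abs_dvisit_sub_le hP0 hP1 hμ0 hμ1 hπ0 hπ1 hπt0 hπt1 hγ0 hγ1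
  calc ∑ s, d s * f s = ∑ s, dt s * f s + ∑ s, (d s - dt s) * f s := by
        rw [← sum_add_distrib]
        exact sum_congr rfl fun s _ => by ring
    _ ≤ ∑ s, dt s * f s + ∑ s, |d s - dt s| * ε := by
        refine add_le_add le_rfl (sum_le_sum fun s _ => ?_)
        calc (d s - dt s) * f s ≤ |(d s - dt s) * f s| := le_abs_self _
          _ ≤ |d s - dt s| * ε := by
            rw [abs_mul]
            exact mul_le_mul_of_nonneg_left (hf s) (abs_nonneg _)
    _ ≤ _ := by
        rw [← sum_mul, mul_right_comm]
        gcongr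

end PolicyComparison

theorem stmt_11_general {S A : Type*} [Fintype S] [Fintype A]
    (P : S → A → S → ℝ)
    (hP0 : ∀ s a s', 0 ≤ P s a s') (hP1 : ∀ s a, ∑ s', P s a s' = 1)
    (γ : ℝ) (hγ0 : 0 < γ) (hγ1 : γ < 1)
    (μ : S → ℝ) (hμ0 : ∀ s, 0 ≤ μ s) (hμ1 : ∑ s, μ s = 1)
    (πb : S → A → ℝ) (hπb0 : ∀ s a, 0 < πb s a)
    (π πt : S → A → ℝ)
    (hπ0 : ∀ s a, 0 < π s a) (hπ1 : ∀ s, ∑ a, π s a = 1)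
    (hπt0 : ∀ s a, 0 < πt s a) (hπt1 : ∀ s, ∑ a, πt s a = 1)
    (Vt : S → ℝ)
    (hVt : ∀ s, Vt s = ∑ a, πt s a *
      (Real.log (πt s a / πb s a) + γ * ∑ s', P s a s' * Vt s')) :
    Jret P μ γ (fun s a => Real.log (π s a / πb s a)) π -
        Jret P μ γ (fun s a => Real.log (πt s a / πb s a)) πt ≤
      (1 - γ)⁻¹ * ∑ s, dvisit P μ γ πt s *
          ∑ a, π s a * Adv P γ (fun s a => Real.log (πt s a / πb s a)) Vt s a +
        (Real.sqrt 2 * γ *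
            (⨆ s, ⨆ a, |Adv P γ (fun s a => Real.log (πt s a / πb s a)) Vt s a|) /
          (1 - γ) ^ 2) *
          Real.sqrt (∑ s, dvisit P μ γ πt s * KL (π s) (πt s)) +
        (1 - γ)⁻¹ * (⨆ s, KL (π s) (πt s)) := by
  set Adv' := Adv P γ (fun s a => Real.log (πt s a / πb s a)) Vt
  set ε := ⨆ s, ⨆ a, |Adv' s a|
  have hπ0' : ∀ s a, 0 ≤ π s a := fun s a => (hπ0 s a).le
  have hπt0' : ∀ s a, 0 ≤ πt s a := fun s a => (hπt0 s a).le
  have hε : 0 ≤ ε := Real.iSup_nonneg fun s => Real.iSup_nonneg fun a => abs_nonneg _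
  have hAdv : ∀ s a, |Adv' s a| ≤ ε := fun s a =>
    (le_ciSup (f := fun a => |Adv' s a|) (Set.finite_range _).bddAbove a).trans
      (le_ciSup (f := fun s => ⨆ a, |Adv' s a|) (Set.finite_range _).bddAbove s)
  have hshift := sum_dvisit_mul_le_add hP0 hP1 hμ0 hμ1 hπ0' hπ1 hπt0' hπt1 hγ0.le hγ1 hε
    fun s => abs_sum_mul_le_of_abs_le (hπ0' s) (hπ1 s) (hAdv s)
  have hpinsker := sum_mul_sum_abs_sub_le_sqrt_two_mul_sqrt (dvisit_nonneg hP0 hμ0 hπt0' hγ0.le hγ1)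
    (sum_dvisit hP0 hP1 hμ0 hμ1 hπt0' hπt1 hγ0.le hγ1) hπ0 hπ1 hπt0 hπt1
  have hKL : ∑ s, dvisit P μ γ π s * KL (π s) (πt s) ≤ ⨆ s, KL (π s) (πt s) :=
    sum_mul_le_of_le (dvisit_nonneg hP0 hμ0 hπ0' hγ0.le hγ1)
      (sum_dvisit hP0 hP1 hμ0 hμ1 hπ0' hπ1 hγ0.le hγ1)
      fun s => le_ciSup (f := fun s => KL (π s) (πt s)) (Set.finite_range _).bddAbove s
  have hγ : 0 < 1 - γ := sub_pos.2 hγ1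
  rw [Jret_log_div_sub_Jret_log_div_eq hP0 hP1 hμ0 hμ1 hπ0 hπ1 hπt0 hπt1 hγ0.le hγ1 hπb0 Vt hVt]
  calc _ ≤ (1 - γ)⁻¹ * (∑ s, dvisit P μ γ πt s * ∑ a, π s a * Adv' s a +
        γ / (1 - γ) * ε * (Real.sqrt 2 * Real.sqrt (∑ s, dvisit P μ γ πt s * KL (π s) (πt s))) +
        ⨆ s, KL (π s) (πt s)) := by
        refine mul_le_mul_of_nonneg_left ?_ (inv_nonneg.2 hγ.le)
        have := mul_le_mul_of_nonneg_left hpinsker (by positivity : 0 ≤ γ / (1 - γ) * ε)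
        linarith
    _ = _ := by field_simp

/-- **Approximate performance difference for policy-dependent reward.** With
`C_π(s,a) = log(π(s,a)/π_b(s,a))`, for any two everywhere-positive policies `π, π̃`:
`J_{C_π}(π) − J_{C_{π̃}}(π̃) ≤ (1−γ)⁻¹ ∑_s d^{π̃}(s) ∑_a π(s,a) A^{π̃}_{C_{π̃}}(s,a)
  + (√2 γ ε_{π̃}/(1−γ)²) √(D^{π̃}_KL(π, π̃)) + (1−γ)⁻¹ D^max_KL(π, π̃)`,
where `ε_{π̃} = max_{s,a} |A^{π̃}_{C_{π̃}}(s,a)|`. -/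
theorem stmt_11 {S A : Type*} [Fintype S] [Fintype A] [Nonempty S] [Nonempty A]
    (P : S → A → S → ℝ)
    (hP0 : ∀ s a s', 0 ≤ P s a s') (hP1 : ∀ s a, ∑ s', P s a s' = 1)
    (γ : ℝ) (hγ0 : 0 < γ) (hγ1 : γ < 1)
    (μ : S → ℝ) (hμ0 : ∀ s, 0 ≤ μ s) (hμ1 : ∑ s, μ s = 1)
    (πb : S → A → ℝ) (hπb0 : ∀ s a, 0 < πb s a) (hπb1 : ∀ s, ∑ a, πb s a = 1)
    (π πt : S → A → ℝ)
    (hπ0 : ∀ s a, 0 < π s a) (hπ1 : ∀ s, ∑ a, π s a = 1)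
    (hπt0 : ∀ s a, 0 < πt s a) (hπt1 : ∀ s, ∑ a, πt s a = 1)
    (Vt : S → ℝ)
    (hVt : ∀ s, Vt s = ∑ a, πt s a *
      (Real.log (πt s a / πb s a) + γ * ∑ s', P s a s' * Vt s')) :
    Jret P μ γ (fun s a => Real.log (π s a / πb s a)) π -
        Jret P μ γ (fun s a => Real.log (πt s a / πb s a)) πt ≤
      (1 - γ)⁻¹ * ∑ s, dvisit P μ γ πt s *
          ∑ a, π s a * Adv P γ (fun s a => Real.log (πt s a / πb s a)) Vt s a +
        (Real.sqrt 2 * γ *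
            (⨆ s, ⨆ a, |Adv P γ (fun s a => Real.log (πt s a / πb s a)) Vt s a|) /
          (1 - γ) ^ 2) *
          Real.sqrt (∑ s, dvisit P μ γ πt s * KL (π s) (πt s)) +
        (1 - γ)⁻¹ * (⨆ s, KL (π s) (πt s)) :=
  stmt_11_general P hP0 hP1 γ hγ0 hγ1 μ hμ0 hμ1 πb hπb0 π πt hπ0 hπ1 hπt0 hπt1 Vt hVt
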